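/- For |q|<1 and any rational (or real) $\alpha > 1/2$ and $\nu$, $\sum_{i,j\geq 0} \frac{q^{\frac{\alpha}{2}i^2+(1-\alpha)ij+\frac{\alpha}{2}j^2+\alpha\nu i-\alpha\nu j}}{(q;q)_i (q;q)_j} = \frac{(-q^{\frac{\alpha}{2}+\alpha\nu};q^{\alpha})_\infty (-q^{\frac{\alpha}{2}-\alpha\nu};q^{\alpha})_\infty (q^{\alpha};q^{\alpha})_\infty}{(q;q)_\infty}$, where $q^x := e^{x \log q}$ for $0<q<1$. -/

import Mathlib

/-!
Reindex the double sum by `n = i - j ∈ ℤ` and `m = min i j`. Since `i j = m (m + |n|)`, the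
sum over `m` is the Durfee rectangle identity `∑ₘ q^(m(m+n)) / ((q;q)ₘ (q;q)ₘ₊ₙ) = 1/(q;q)_∞`
(the sum is independent of `n` by telescoping, and tends to `1/(q;q)_∞` as `n → ∞`). What is
left is the theta series `∑ₙ q^(α n²/2 + α ν n) / (q;q)_∞`, to which the Jacobi triple product
in base `q^α` applies. The triple product is itself the case `α = 1` of the same reduction:
there the double sum splits into two Euler series `∑ᵢ xⁱ q^(i(i-1)/2) / (q;q)ᵢ = (-x;q)_∞`.
-/

open Real Filter Topology Finset

namespace QSeries

variable {q : ℝ}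

/-- `(q;q)_n` -/
noncomputable def qPochhammer (q : ℝ) (n : ℕ) : ℝ := ∏ k ∈ range n, (1 - q ^ (k + 1))

/-- `(q;q)_∞` -/
noncomputable def qPochhammerInf (q : ℝ) : ℝ := ∏' k : ℕ, (1 - q ^ (k + 1))

lemma one_sub_pow_succ_pos (hq0 : 0 < q) (hq1 : q < 1) (k : ℕ) : 0 < 1 - q ^ (k + 1) :=
  sub_pos.2 (pow_lt_one₀ hq0.le hq1 k.succ_ne_zero)

lemma qPochhammer_succ (n : ℕ) : qPochhammer q (n + 1) = qPochhammer q n * (1 - q ^ (n + 1)) :=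
  prod_range_succ _ n

lemma qPochhammer_pos (hq0 : 0 < q) (hq1 : q < 1) (n : ℕ) : 0 < qPochhammer q n :=
  prod_pos fun k _ => one_sub_pow_succ_pos hq0 hq1 k

lemma qPochhammer_antitone (hq0 : 0 < q) (hq1 : q < 1) : Antitone (qPochhammer q) :=
  antitone_nat_of_succ_le fun n => by
    rw [qPochhammer_succ]
    exact mul_le_of_le_one_right (qPochhammer_pos hq0 hq1 n).le
      (sub_le_self _ (pow_nonneg hq0.le _))

lemma summable_pow_succ (hq0 : 0 < q) (hq1 : q < 1) : Summable fun k : ℕ => q ^ (k + 1) :=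
  (summable_nat_add_iff 1).2 (summable_geometric_of_lt_one hq0.le hq1)

lemma tendsto_qPochhammer (hq0 : 0 < q) (hq1 : q < 1) :
    Tendsto (qPochhammer q) atTop (𝓝 (qPochhammerInf q)) := by
  have h := Real.multipliable_one_add_of_summable (summable_pow_succ hq0 hq1).neg
  simp only [← sub_eq_add_neg] at h
  exact h.tendsto_prod_tprod_nat

lemma qPochhammerInf_pos (hq0 : 0 < q) (hq1 : q < 1) : 0 < qPochhammerInf q := by
  have h := Real.summable_log_one_add_of_summable (summable_pow_succ hq0 hq1).neg
  simp only [← sub_eq_add_neg] at h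
  rw [qPochhammerInf, ← Real.rexp_tsum_eq_tprod (one_sub_pow_succ_pos hq0 hq1) h]
  exact exp_pos _

lemma qPochhammerInf_le (hq0 : 0 < q) (hq1 : q < 1) (n : ℕ) :
    qPochhammerInf q ≤ qPochhammer q n :=
  (qPochhammer_antitone hq0 hq1).le_of_tendsto (tendsto_qPochhammer hq0 hq1) n


lemma hasSum_sub_succ_of_tendsto {E : Type*} [AddCommGroup E] [TopologicalSpace E]
    [IsTopologicalAddGroup E] [T2Space E] {b : ℕ → E} {l : E}
    (hs : Summable fun m => b m - b (m + 1)) (hb : Tendsto b atTop (𝓝 l)) :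
    HasSum (fun m => b m - b (m + 1)) (b 0 - l) := by
  rw [hs.hasSum_iff_tendsto_nat]
  simp_rw [sum_range_sub']
  exact hb.const_sub _

noncomputable def durfeeTerm (q : ℝ) (n m : ℕ) : ℝ :=
  q ^ (m * (m + n)) / (qPochhammer q m * qPochhammer q (m + n))

lemma durfeeTerm_nonneg (hq0 : 0 < q) (hq1 : q < 1) (n m : ℕ) : 0 ≤ durfeeTerm q n m :=
  div_nonneg (pow_nonneg hq0.le _)
    (mul_pos (qPochhammer_pos hq0 hq1 m) (qPochhammer_pos hq0 hq1 _)).le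

lemma durfeeTerm_le (hq0 : 0 < q) (hq1 : q < 1) (n m : ℕ) :
    durfeeTerm q n m ≤ q ^ m / qPochhammerInf q ^ 2 := by
  have hinf := qPochhammerInf_pos hq0 hq1
  have hpow : q ^ (m * (m + n)) ≤ q ^ m := by
    rcases m.eq_zero_or_pos with rfl | hm
    · simp
    · exact pow_le_pow_of_le_one hq0.le hq1.le (Nat.le_mul_of_pos_right m (by omega))
  rw [durfeeTerm, sq]
  exact div_le_div₀ (pow_nonneg hq0.le _) hpow (by positivity)
    (mul_le_mul (qPochhammerInf_le hq0 hq1 m) (qPochhammerInf_le hq0 hq1 _) hinf.le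
      (qPochhammer_pos hq0 hq1 m).le)

lemma summable_durfeeTerm (hq0 : 0 < q) (hq1 : q < 1) (n : ℕ) : Summable (durfeeTerm q n) :=
  ((summable_geometric_of_lt_one hq0.le hq1).div_const _).of_nonneg_of_le
    (durfeeTerm_nonneg hq0 hq1 n) (durfeeTerm_le hq0 hq1 n)

lemma durfeeTerm_sub_succ (hq0 : 0 < q) (hq1 : q < 1) (n m : ℕ) :
    durfeeTerm q n m - durfeeTerm q (n + 1) m =
      (1 - q ^ m) * durfeeTerm q n m - (1 - q ^ (m + 1)) * durfeeTerm q n (m + 1) := by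
  have h1 := (qPochhammer_pos hq0 hq1 m).ne'
  have h2 := (qPochhammer_pos hq0 hq1 (m + n)).ne'
  have h3 := (one_sub_pow_succ_pos hq0 hq1 m).ne'
  have h4 := (one_sub_pow_succ_pos hq0 hq1 (m + n)).ne'
  simp only [durfeeTerm, show m + (n + 1) = m + n + 1 by ring,
    show m + 1 + n = m + n + 1 by ring, qPochhammer_succ]
  field_simp
  ring

lemma tsum_durfeeTerm_succ (hq0 : 0 < q) (hq1 : q < 1) (n : ℕ) :
    ∑' m, durfeeTerm q (n + 1) m = ∑' m, durfeeTerm q n m := by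
  set b := fun m : ℕ => (1 - q ^ m) * durfeeTerm q n m
  have hdiff := (summable_durfeeTerm hq0 hq1 n).hasSum.sub
    (summable_durfeeTerm hq0 hq1 (n + 1)).hasSum
  have hb : Tendsto b atTop (𝓝 0) := by
    simpa using ((tendsto_pow_atTop_nhds_zero_of_lt_one hq0.le hq1).const_sub 1).mul
      (summable_durfeeTerm hq0 hq1 n).tendsto_atTop_zero
  have htel := hasSum_sub_succ_of_tendsto
    (hdiff.summable.congr fun m => durfeeTerm_sub_succ hq0 hq1 n m) hb
  simp only [pow_zero, sub_self, zero_mul] at htel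
  have := hdiff.unique (htel.congr_fun fun m => durfeeTerm_sub_succ hq0 hq1 n m)
  linarith

lemma tendsto_durfeeTerm (hq0 : 0 < q) (hq1 : q < 1) (m : ℕ) :
    Tendsto (fun n => durfeeTerm q n m) atTop
      (𝓝 (if m = 0 then (qPochhammerInf q)⁻¹ else 0)) := by
  have hP : Tendsto (fun n => qPochhammer q (m + n)) atTop (𝓝 (qPochhammerInf q)) :=
    (tendsto_qPochhammer hq0 hq1).comp (tendsto_atTop_atTop_of_monotone
      (fun _ _ h => by omega) fun n => ⟨n, by omega⟩)
  rcases m with _ | m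
  · simpa [durfeeTerm, qPochhammer] using hP.inv₀ (qPochhammerInf_pos hq0 hq1).ne'
  · have hpow : Tendsto (fun n => q ^ ((m + 1) * (m + 1 + n))) atTop (𝓝 0) := by
      have h : ∀ n, q ^ ((m + 1) * (m + 1 + n)) = q ^ ((m + 1) * (m + 1)) * (q ^ (m + 1)) ^ n :=
        fun n => by rw [mul_add, pow_add, pow_mul q (m + 1) n]
      simpa [h] using (tendsto_pow_atTop_nhds_zero_of_lt_one (pow_nonneg hq0.le _)
        (pow_lt_one₀ hq0.le hq1 m.succ_ne_zero)).const_mul (q ^ ((m + 1) * (m + 1)))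
    have := hpow.div ((tendsto_const_nhds (x := qPochhammer q (m + 1))).mul hP)
      (mul_pos (qPochhammer_pos hq0 hq1 _) (qPochhammerInf_pos hq0 hq1)).ne'
    simpa [durfeeTerm, Pi.div_def] using this

/-- The Durfee rectangle identity. -/
lemma hasSum_durfeeTerm (hq0 : 0 < q) (hq1 : q < 1) (n : ℕ) :
    HasSum (durfeeTerm q n) (qPochhammerInf q)⁻¹ := by
  have hconst : ∀ n, ∑' m, durfeeTerm q n m = ∑' m, durfeeTerm q 0 m := fun n => by
    induction n with
    | zero => rfl
    | succ n ih => rw [tsum_durfeeTerm_succ hq0 hq1, ih]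
  have hlim : Tendsto (fun n => ∑' m, durfeeTerm q n m) atTop (𝓝 (qPochhammerInf q)⁻¹) := by
    simpa using tendsto_tsum_of_dominated_convergence
      ((summable_geometric_of_lt_one hq0.le hq1).div_const (qPochhammerInf q ^ 2))
      (tendsto_durfeeTerm hq0 hq1) (Eventually.of_forall fun n m => by
        rw [Real.norm_of_nonneg (durfeeTerm_nonneg hq0 hq1 n m)]
        exact durfeeTerm_le hq0 hq1 n m)
  simp only [hconst] at hlim
  rw [← tendsto_nhds_unique tendsto_const_nhds hlim, ← hconst n]
  exact (summable_durfeeTerm hq0 hq1 n).hasSum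

lemma summable_rpow_quadratic (hq0 : 0 < q) (hq1 : q < 1) {a : ℝ} (ha : 0 < a) (b : ℝ) :
    Summable fun n : ℤ => q ^ (a * n ^ 2 + b * n) := by
  have hlog : 0 < -log q := neg_pos.2 (log_neg hq0 hq1)
  refine (summable_pow_mul_jacobiTheta₂_term_bound (|b| * -log q / (2 * π))
    (T := a * -log q / π) (by positivity) 0).of_nonneg_of_le (fun n => by positivity)
    fun n => ?_
  rw [rpow_def_of_pos hq0, pow_zero, one_mul, exp_le_exp, Int.cast_abs]
  have hbn : -(|b| * |(n : ℝ)|) ≤ b * n := by rw [← abs_mul]; exact neg_abs_le _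
  have : -π * (a * -log q / π * n ^ 2 - 2 * (|b| * -log q / (2 * π)) * |(n : ℝ)|) =
      -log q * -(a * n ^ 2 - |b| * |(n : ℝ)|) := by field_simp; ring
  rw [this]
  nlinarith

/-- `(n, m) ↦ (i, j)` with `i - j = n` and `min i j = m`. -/
def diagEquiv : ℤ × ℕ ≃ ℕ × ℕ where
  toFun z := (z.2 + z.1.toNat, z.2 + (-z.1).toNat)
  invFun p := ((p.1 : ℤ) - p.2, min p.1 p.2)
  left_inv := by rintro ⟨n, m⟩; simp only [Prod.mk.injEq]; omega
  right_inv := by rintro ⟨i, j⟩; simp only [Prod.mk.injEq]; omega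

noncomputable def quadraticTerm (q a b : ℝ) (p : ℕ × ℕ) : ℝ :=
  q ^ (a * ((p.1 : ℝ) - p.2) ^ 2 + p.1 * p.2 + b * (p.1 - p.2)) /
    (qPochhammer q p.1 * qPochhammer q p.2)

lemma quadraticTerm_diagEquiv (hq0 : 0 < q) (a b : ℝ) (n : ℤ) (m : ℕ) :
    quadraticTerm q a b (diagEquiv (n, m)) =
      q ^ (a * n ^ 2 + b * n) * durfeeTerm q n.natAbs m := by
  have hsplit : ∀ x : ℝ, q ^ (x + ((m * (m + n.natAbs) : ℕ) : ℝ)) =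
      q ^ x * q ^ (m * (m + n.natAbs)) := fun x => by rw [rpow_add hq0, rpow_natCast]
  rw [durfeeTerm, mul_div_assoc', ← hsplit]
  rcases Int.eq_nat_or_neg n with ⟨k, rfl | rfl⟩
  · have h : diagEquiv ((k : ℤ), m) = (m + k, m) := by simp [diagEquiv]
    rw [h, quadraticTerm, mul_comm (qPochhammer q _), Int.natAbs_natCast]
    congr 2
    push_cast
    ring
  · have h : diagEquiv (-(k : ℤ), m) = (m, m + k) := by simp [diagEquiv]
    rw [h, quadraticTerm, Int.natAbs_neg, Int.natAbs_natCast]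
    congr 2
    push_cast
    ring

lemma quadraticTerm_nonneg (hq0 : 0 < q) (hq1 : q < 1) (a b : ℝ) (p : ℕ × ℕ) :
    0 ≤ quadraticTerm q a b p :=
  div_nonneg (rpow_nonneg hq0.le _)
    (mul_pos (qPochhammer_pos hq0 hq1 _) (qPochhammer_pos hq0 hq1 _)).le

lemma hasSum_quadraticTerm (hq0 : 0 < q) (hq1 : q < 1) {a : ℝ} (ha : 0 < a) (b : ℝ) :
    HasSum (quadraticTerm q a b) ((∑' n : ℤ, q ^ (a * n ^ 2 + b * n)) / qPochhammerInf q) := by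
  rw [← diagEquiv.hasSum_iff]
  have hfiber : ∀ n : ℤ, HasSum (fun m => (quadraticTerm q a b ∘ diagEquiv) (n, m))
      (q ^ (a * n ^ 2 + b * n) / qPochhammerInf q) := fun n => by
    simpa only [Function.comp_apply, quadraticTerm_diagEquiv hq0, div_eq_mul_inv] using
      (hasSum_durfeeTerm hq0 hq1 n.natAbs).mul_left (q ^ (a * n ^ 2 + b * n))
  have hdiag := (summable_rpow_quadratic hq0 hq1 ha b).hasSum.div_const (qPochhammerInf q)
  have hsummable : Summable (quadraticTerm q a b ∘ diagEquiv) :=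
    (summable_prod_of_nonneg fun _ => quadraticTerm_nonneg hq0 hq1 a b _).2
      ⟨fun n => (hfiber n).summable, hdiag.summable.congr fun n => (hfiber n).tsum_eq.symm⟩
  rw [← (hsummable.hasSum.prod_fiberwise hfiber).unique hdiag]
  exact hsummable.hasSum

noncomputable def eulerTerm (q x : ℝ) (i : ℕ) : ℝ := x ^ i * q ^ i.choose 2 / qPochhammer q i

lemma eulerTerm_mul (x y : ℝ) (i : ℕ) : eulerTerm q (x * y) i = y ^ i * eulerTerm q x i := by
  simp only [eulerTerm, mul_pow]
  ring

lemma eulerTerm_succ (hq0 : 0 < q) (hq1 : q < 1) (x : ℝ) (i : ℕ) :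
    eulerTerm q x (i + 1) = x * q ^ i / (1 - q ^ (i + 1)) * eulerTerm q x i := by
  have := (qPochhammer_pos hq0 hq1 i).ne'
  have := (one_sub_pow_succ_pos hq0 hq1 i).ne'
  rw [eulerTerm, eulerTerm, qPochhammer_succ, Nat.choose_succ_succ', Nat.choose_one_right]
  field_simp
  ring

lemma summable_eulerTerm (hq0 : 0 < q) (hq1 : q < 1) (x : ℝ) : Summable (eulerTerm q x) := by
  have hratio : Tendsto (fun i : ℕ => |x| * q ^ i / (1 - q ^ (i + 1))) atTop (𝓝 0) := by
    have hpow := tendsto_pow_atTop_nhds_zero_of_lt_one hq0.le hq1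
    simpa [pow_succ, Pi.div_def] using
      (hpow.const_mul |x|).div ((hpow.mul_const q).const_sub 1) (by simp)
  refine summable_of_ratio_norm_eventually_le (r := 1 / 2) (by norm_num) ?_
  filter_upwards [hratio.eventually (ge_mem_nhds (by norm_num : (0 : ℝ) < 1 / 2))] with i hi
  rw [eulerTerm_succ hq0 hq1, norm_mul, Real.norm_eq_abs, abs_div, abs_mul,
    abs_of_pos (pow_pos hq0 i), abs_of_pos (one_sub_pow_succ_pos hq0 hq1 i)]
  exact mul_le_mul_of_nonneg_right hi (norm_nonneg _)

lemma tsum_eulerTerm_eq_one_add_mul (hq0 : 0 < q) (hq1 : q < 1) (x : ℝ) :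
    ∑' i, eulerTerm q x i = (1 + x) * ∑' i, eulerTerm q (x * q) i := by
  have hdiff : HasSum (fun i => eulerTerm q x i * (1 - q ^ i))
      (∑' i, eulerTerm q x i - ∑' i, eulerTerm q (x * q) i) := by
    refine ((summable_eulerTerm hq0 hq1 x).hasSum.sub
      (summable_eulerTerm hq0 hq1 (x * q)).hasSum).congr_fun fun i => ?_
    rw [eulerTerm_mul]
    ring
  have hshift : HasSum (fun i => eulerTerm q x (i + 1) * (1 - q ^ (i + 1)))
      (x * ∑' i, eulerTerm q (x * q) i) := by
    refine ((summable_eulerTerm hq0 hq1 (x * q)).hasSum.mul_left x).congr_fun fun i => ?_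
    rw [eulerTerm_succ hq0 hq1, eulerTerm_mul]
    field_simp [(one_sub_pow_succ_pos hq0 hq1 i).ne']
  have := hdiff.unique
    ((hasSum_nat_add_iff (f := fun i => eulerTerm q x i * (1 - q ^ i)) 1).1 hshift)
  simp only [range_one, sum_singleton, pow_zero, sub_self, mul_zero, add_zero] at this
  linarith

lemma tsum_eulerTerm_eq_prod_mul (hq0 : 0 < q) (hq1 : q < 1) (x : ℝ) (N : ℕ) :
    ∑' i, eulerTerm q x i =
      (∏ k ∈ range N, (1 + x * q ^ k)) * ∑' i, eulerTerm q (x * q ^ N) i := by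
  induction N with
  | zero => simp
  | succ N ih =>
    rw [ih, tsum_eulerTerm_eq_one_add_mul hq0 hq1 (x * q ^ N), prod_range_succ, pow_succ,
      mul_assoc x]
    ring

lemma tendsto_tsum_eulerTerm (hq0 : 0 < q) (hq1 : q < 1) (x : ℝ) :
    Tendsto (fun N => ∑' i, eulerTerm q (x * q ^ N) i) atTop (𝓝 1) := by
  have hx : Tendsto (fun N => x * q ^ N) atTop (𝓝 0) := by
    simpa using (tendsto_pow_atTop_nhds_zero_of_lt_one hq0.le hq1).const_mul x
  have hterm : ∀ i,
      Tendsto (fun N => eulerTerm q (x * q ^ N) i) atTop (𝓝 (eulerTerm q 0 i)) :=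
    fun i => ((continuous_pow i).mul_const _ |>.div_const _).continuousAt.tendsto.comp hx
  have hbound : ∀ N i, ‖eulerTerm q (x * q ^ N) i‖ ≤ ‖eulerTerm q x i‖ := fun N i => by
    rw [eulerTerm_mul, norm_mul, norm_pow, Real.norm_of_nonneg (pow_nonneg hq0.le N)]
    exact mul_le_of_le_one_left (norm_nonneg _) (pow_le_one₀ (by positivity)
      (pow_le_one₀ hq0.le hq1.le))
  have hlim := tendsto_tsum_of_dominated_convergence (summable_eulerTerm hq0 hq1 x).norm hterm
    (Eventually.of_forall hbound)
  rw [tsum_eq_single 0 fun i hi => by simp [eulerTerm, hi]] at hlim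
  simpa [eulerTerm, qPochhammer] using hlim

/-- Euler's identity. -/
lemma hasSum_eulerTerm (hq0 : 0 < q) (hq1 : q < 1) (x : ℝ) :
    HasSum (eulerTerm q x) (∏' k : ℕ, (1 + x * q ^ k)) := by
  have hprod := (Real.multipliable_one_add_of_summable
    ((summable_geometric_of_lt_one hq0.le hq1).mul_left x)).tendsto_prod_tprod_nat
  have hlim := hprod.mul (tendsto_tsum_eulerTerm hq0 hq1 x)
  simp only [← tsum_eulerTerm_eq_prod_mul hq0 hq1, mul_one] at hlim
  rw [← tendsto_nhds_unique tendsto_const_nhds hlim]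
  exact (summable_eulerTerm hq0 hq1 x).hasSum

lemma eulerTerm_rpow (hq0 : 0 < q) (c : ℝ) (i : ℕ) :
    eulerTerm q (q ^ c) i = q ^ (c * i + i * (i - 1) / 2) / qPochhammer q i := by
  rw [eulerTerm, ← rpow_natCast (q ^ c), ← rpow_mul hq0.le, ← rpow_natCast q (i.choose 2),
    ← rpow_add hq0, Nat.cast_choose_two]

lemma quadraticTerm_half_eq_mul (hq0 : 0 < q) (b : ℝ) (p : ℕ × ℕ) :
    quadraticTerm q (1 / 2) b p =
      eulerTerm q (q ^ (1 / 2 + b)) p.1 * eulerTerm q (q ^ (1 / 2 - b)) p.2 := by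
  rw [quadraticTerm, eulerTerm_rpow hq0, eulerTerm_rpow hq0, div_mul_div_comm, ← rpow_add hq0]
  congr 2
  ring

/-- The Jacobi triple product identity, read off from `hasSum_quadraticTerm` at `a = 1 / 2`. -/
lemma tsum_rpow_quadratic_eq_prod (hq0 : 0 < q) (hq1 : q < 1) (b : ℝ) :
    ∑' n : ℤ, q ^ (1 / 2 * n ^ 2 + b * n) =
      (∏' k : ℕ, (1 + q ^ (1 / 2 + b) * q ^ k)) *
        (∏' k : ℕ, (1 + q ^ (1 / 2 - b) * q ^ k)) * qPochhammerInf q := by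
  have hsummable : ∀ c : ℝ, Summable fun i => ‖eulerTerm q (q ^ c) i‖ :=
    fun c => (summable_eulerTerm hq0 hq1 _).norm
  have hprod := (hasSum_eulerTerm hq0 hq1 (q ^ (1 / 2 + b))).mul
    (hasSum_eulerTerm hq0 hq1 (q ^ (1 / 2 - b)))
    (summable_mul_of_summable_norm (hsummable _) (hsummable _))
  have h := (hasSum_quadraticTerm hq0 hq1 (by norm_num : (0 : ℝ) < 1 / 2) b).unique
    (hprod.congr_fun (quadraticTerm_half_eq_mul hq0 b))
  rw [div_eq_iff (qPochhammerInf_pos hq0 hq1).ne'] at h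
  exact h

end QSeries

open QSeries

/-- Zagier's Example 1 (Theorem 1.1 of the paper). -/
theorem zagier_example1 (q : ℝ) (hq0 : 0 < q) (hq1 : q < 1) (α ν : ℝ) (hα : 1 / 2 < α) :
    ∑' p : ℕ × ℕ,
      q ^ (α / 2 * (p.1 : ℝ) ^ 2 + (1 - α) * p.1 * p.2 + α / 2 * (p.2 : ℝ) ^ 2 +
          α * ν * p.1 - α * ν * p.2) /
        ((∏ k ∈ Finset.range p.1, (1 - q ^ (k + 1))) *
          ∏ k ∈ Finset.range p.2, (1 - q ^ (k + 1))) =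
    ((∏' k : ℕ, (1 + q ^ (α / 2 + α * ν + α * k))) *
        (∏' k : ℕ, (1 + q ^ (α / 2 - α * ν + α * k))) *
        ∏' k : ℕ, (1 - q ^ (α * (k + 1)))) /
      ∏' k : ℕ, (1 - q ^ (k + 1)) := by
  have hα0 : 0 < α := by linarith
  have hQ : ∀ c : ℝ, (q ^ α) ^ c = q ^ (α * c) := fun c => (rpow_mul hq0.le α c).symm
  have hQn : ∀ k : ℕ, (q ^ α) ^ k = q ^ (α * k) :=
    fun k => (rpow_mul_natCast hq0.le α k).symm
  calc _ = ∑' p, quadraticTerm q (α / 2) (α * ν) p := tsum_congr fun p => by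
        rw [quadraticTerm, qPochhammer, qPochhammer]
        ring_nf
    _ = (∑' n : ℤ, (q ^ α) ^ (1 / 2 * n ^ 2 + ν * n)) / qPochhammerInf q := by
        rw [(hasSum_quadraticTerm hq0 hq1 (half_pos hα0) (α * ν)).tsum_eq]
        congr 1
        exact tsum_congr fun n => by rw [hQ]; ring_nf
    _ = _ := by
        rw [tsum_rpow_quadratic_eq_prod (rpow_pos_of_pos hq0 α) (rpow_lt_one hq0.le hq1 hα0)]
        simp only [qPochhammerInf, hQ, hQn, ← rpow_add hq0]
        push_cast
        ring_nf
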